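/- Let f(t), b(t) ∈ ℤ_d[[t]] be power series with f(0) a unit. For each letter x ∈ ℤ/dℤ, the state of τ_{f,b} at the first-level vertex x is τ_{f,b}|_x = τ_{f, x·σ(f) + σ(b)}, where σ(c(t)) = (c(t) − c(0))/t denotes the shift of a power series. -/

import Mathlib

/-- The affine transformation `τ_{f,b}` of `ℤ_d[[t]]`, `g ↦ b + g·f`, viewed as a
transformation of `ℤ_d^∞` via coefficient sequences. -/
noncomputable def tauMap (d : ℕ) (f b : PowerSeries (ZMod d)) (g : ℕ → ZMod d) :
    ℕ → ZMod d :=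
  fun n => PowerSeries.coeff n (b + (PowerSeries.mk g) * f)

/-- The sequence in `ℤ_d^∞` whose first entry is `u` and whose tail is `w`. -/
def consSeq (d : ℕ) (u : ZMod d) (w : ℕ → ZMod d) : ℕ → ZMod d :=
  fun n => match n with
  | 0 => u
  | k + 1 => w k

/-- The state `g|_u` of a transformation of the boundary `ℤ_d^∞` at a first-level
vertex `u`: `g|_u(w)` is the tail of `g(uw)`. -/
def stateMap (d : ℕ) (g : (ℕ → ZMod d) → ℕ → ZMod d) (u : ZMod d) :
    (ℕ → ZMod d) → ℕ → ZMod d :=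
  fun w n => g (consSeq d u w) (n + 1)

/-- The shift of a power series: `σ(c(t)) = (c(t) − c(0))/t`. -/
noncomputable def shiftPS (d : ℕ) (c : PowerSeries (ZMod d)) : PowerSeries (ZMod d) :=
  PowerSeries.mk fun n => PowerSeries.coeff (n + 1) c

open PowerSeries

lemma coeff_shiftPS (d : ℕ) (c : PowerSeries (ZMod d)) (n : ℕ) :
    coeff n (shiftPS d c) = coeff (n + 1) c :=
  coeff_mk _ _

lemma mk_consSeq (d : ℕ) (x : ZMod d) (w : ℕ → ZMod d) :
    mk (consSeq d x w) = C x + X * mk w := by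
  ext (_ | k)
  · simp [consSeq]
  · simp [consSeq, coeff_succ_X_mul]

theorem stmt_8_general (d : ℕ) (f b : PowerSeries (ZMod d)) (x : ZMod d) :
    stateMap d (tauMap d f b) x =
      tauMap d f (PowerSeries.C x * shiftPS d f + shiftPS d b) := by
  funext w n
  simp only [stateMap, tauMap, mk_consSeq, add_mul, mul_assoc, map_add, coeff_succ_X_mul,
    coeff_C_mul, coeff_shiftPS]
  ring

/-- For `f, b ∈ ℤ_d[[t]]` with `f(0)` a unit and each letter `x ∈ ℤ/dℤ`, the state of
`τ_{f,b}` at the first-level vertex `x` is `τ_{f,b}|_x = τ_{f, x·σ(f) + σ(b)}`. -/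
theorem stmt_8 (d : ℕ) (hd : 2 ≤ d) (f b : PowerSeries (ZMod d))
    (hf : IsUnit (PowerSeries.constantCoeff f)) (x : ZMod d) :
    stateMap d (tauMap d f b) x =
      tauMap d f (PowerSeries.C x * shiftPS d f + shiftPS d b) :=
  stmt_8_general d f b x
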